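/- arXiv:2309.03853 — 2 statements merged into one kernel-verified Lean document; each statement's English description precedes it below -/
import Mathlib

section
/- For a symmetric positive definite n×n matrix A (n ≥ 2): the anisotropic Gaussian perimeter P_{γ_A} assigns equal values to any two half-spaces of equal γ_A measure if and only if A = aI_n for some constant a > 0. -/
open MeasureTheory Metric Filter Set Matrix
open scoped ENNReal Topology RealInnerProductSpace Pointwise

noncomputable section

def matVec {n : ℕ} (M : Matrix (Fin n) (Fin n) ℝ) (x : EuclideanSpace ℝ (Fin n)) :
    EuclideanSpace ℝ (Fin n) :=
  (EuclideanSpace.equiv (Fin n) ℝ).symm (M.mulVec (EuclideanSpace.equiv (Fin n) ℝ x))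

def opNorm {n : ℕ} (M : Matrix (Fin n) (Fin n) ℝ) : ℝ :=
  ‖Matrix.toEuclideanCLM (𝕜 := ℝ) M‖

def gaussDensity {n : ℕ} (A : Matrix (Fin n) (Fin n) ℝ) (x : EuclideanSpace ℝ (Fin n)) : ℝ :=
  Real.exp (- (inner ℝ (matVec A x) x : ℝ) / 2)

def gaussMass {n : ℕ} (A : Matrix (Fin n) (Fin n) ℝ) (E : Set (EuclideanSpace ℝ (Fin n))) : ℝ :=
  (Real.sqrt A.det / (2 * Real.pi) ^ ((n : ℝ) / 2)) * ∫ x in E, gaussDensity A x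

def essBoundary {n : ℕ} (E : Set (EuclideanSpace ℝ (Fin n))) : Set (EuclideanSpace ℝ (Fin n)) :=
  {x | ¬ Tendsto (fun r : ℝ => volume (E ∩ ball x r) / volume (ball x r)) (𝓝[>] 0) (𝓝 0) ∧
       ¬ Tendsto (fun r : ℝ => volume (E ∩ ball x r) / volume (ball x r)) (𝓝[>] 0) (𝓝 1)}

def gaussPerimIn {n : ℕ} (A : Matrix (Fin n) (Fin n) ℝ)
    (E F : Set (EuclideanSpace ℝ (Fin n))) : ℝ :=
  (Real.sqrt A.det / (2 * Real.pi) ^ (((n : ℝ) - 1) / 2)) *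
    ∫ x in essBoundary E ∩ F, gaussDensity A x ∂(μH[(n : ℝ) - 1])

def gaussPerim {n : ℕ} (A : Matrix (Fin n) (Fin n) ℝ)
    (E : Set (EuclideanSpace ℝ (Fin n))) : ℝ :=
  gaussPerimIn A E Set.univ

def halfSpace {n : ℕ} (ω : EuclideanSpace ℝ (Fin n)) (t : ℝ) :
    Set (EuclideanSpace ℝ (Fin n)) :=
  {x | (inner ℝ x ω : ℝ) < t}

def gaussCDF (x : ℝ) : ℝ :=
  (Real.sqrt (2 * Real.pi))⁻¹ * ∫ t in Set.Iio x, Real.exp (- t ^ 2 / 2)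

def gaussBary {n : ℕ} (A : Matrix (Fin n) (Fin n) ℝ)
    (E : Set (EuclideanSpace ℝ (Fin n))) : EuclideanSpace ℝ (Fin n) :=
  (Real.sqrt A.det / (2 * Real.pi) ^ ((n : ℝ) / 2)) • ∫ x in E, gaussDensity A x • x

/-! The Gaussian density of `A` is even, so every half-space through the origin carries half of
the total mass. The essential boundary of `H(ω, 0)` is the hyperplane `ω⊥`; for the `i`-th
eigenvector of `A` this is a coordinate hyperplane in the eigenbasis, and the perimeter becomes
a product of one-dimensional Gaussian integrals, proportional to `∏_{j ≠ i} λ_j^{-1/2}`. Equal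
perimeters of these half-spaces therefore force all eigenvalues to coincide.

Conversely, for `A = a • 1` the density is invariant under linear isometries. A reflection maps
`ω₁` to `ω₂` and hence `H(ω₁, t)` to `H(ω₂, t)`, preserving mass and perimeter, and the mass of
`H(ω, t)` is strictly increasing in `t`, so equal masses force `t₁ = t₂`. -/

section GaussianIntegral

variable {ι : Type*} [Fintype ι]

lemma exp_neg_sum_mul_sq_div_two_eq_prod (c z : ι → ℝ) :
    Real.exp (-(∑ j, c j * z j ^ 2) / 2) = ∏ j, Real.exp (-(c j / 2) * z j ^ 2) := by
  rw [← Real.exp_sum, neg_div, Finset.sum_div, ← Finset.sum_neg_distrib]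
  congr! 2 with j
  ring

lemma integrable_exp_neg_sum_mul_sq {c : ι → ℝ} (hc : ∀ j, 0 < c j) :
    Integrable fun z : EuclideanSpace ℝ ι => Real.exp (-(∑ j, c j * z j ^ 2) / 2) := by
  have h := Integrable.fintype_prod fun j => integrable_exp_neg_mul_sq (half_pos (hc j))
  simp_rw [← exp_neg_sum_mul_sq_div_two_eq_prod] at h
  exact ((EuclideanSpace.volume_preserving_symm_measurableEquiv_toLp ι).symm.integrable_comp_emb
    (MeasurableEquiv.measurableEmbedding _)).mp h

lemma integral_exp_neg_sum_mul_sq (c : ι → ℝ) :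
    ∫ z : EuclideanSpace ℝ ι, Real.exp (-(∑ j, c j * z j ^ 2) / 2) =
      ∏ j, √(2 * Real.pi / c j) := by
  rw [← (EuclideanSpace.volume_preserving_symm_measurableEquiv_toLp ι).symm.integral_comp
    (MeasurableEquiv.measurableEmbedding _)]
  simp_rw [exp_neg_sum_mul_sq_div_two_eq_prod]
  refine (integral_fintype_prod_eq_prod fun j t => Real.exp (-(c j / 2) * t ^ 2)).trans
    (Finset.prod_congr rfl fun j _ => ?_)
  rw [integral_gaussian, div_div_eq_mul_div, mul_comm]

end GaussianIntegral

section Density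

variable {n : ℕ} {A : Matrix (Fin n) (Fin n) ℝ}

lemma matVec_eq_toEuclideanLin (A : Matrix (Fin n) (Fin n) ℝ) (x : EuclideanSpace ℝ (Fin n)) :
    matVec A x = Matrix.toEuclideanLin A x := rfl

lemma matVec_eigenvectorBasis (hA : A.IsHermitian) (j : Fin n) :
    matVec A (hA.eigenvectorBasis j) = hA.eigenvalues j • hA.eigenvectorBasis j :=
  congrArg (WithLp.toLp 2) (hA.mulVec_eigenvectorBasis j)

lemma inner_matVec_eigenvectorBasis_repr_symm (hA : A.IsHermitian) (y : EuclideanSpace ℝ (Fin n)) :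
    ⟪matVec A (hA.eigenvectorBasis.repr.symm y), hA.eigenvectorBasis.repr.symm y⟫ =
      ∑ j, hA.eigenvalues j * y j ^ 2 := by
  set B := hA.eigenvectorBasis
  have hAy : matVec A (B.repr.symm y) =
      B.repr.symm (WithLp.toLp 2 fun j => hA.eigenvalues j * y j) := by
    rw [← B.sum_repr_symm, ← B.sum_repr_symm, matVec_eq_toEuclideanLin, map_sum]
    refine Finset.sum_congr rfl fun j _ => ?_
    rw [map_smul, ← matVec_eq_toEuclideanLin, matVec_eigenvectorBasis, smul_smul, mul_comm]
  rw [hAy, B.repr.symm.inner_map_map, PiLp.inner_apply]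
  simp only [RCLike.inner_apply, conj_trivial]
  exact Finset.sum_congr rfl fun j _ => by ring

lemma gaussDensity_eigenvectorBasis_repr_symm (hA : A.IsHermitian) (y : EuclideanSpace ℝ (Fin n)) :
    gaussDensity A (hA.eigenvectorBasis.repr.symm y) =
      Real.exp (-(∑ j, hA.eigenvalues j * y j ^ 2) / 2) := by
  rw [gaussDensity, inner_matVec_eigenvectorBasis_repr_symm]

lemma integrable_gaussDensity (hA : A.PosDef) : Integrable (gaussDensity A) := by
  let U := hA.1.eigenvectorBasis.repr.symm
  refine (U.measurePreserving.integrable_comp_emb U.toHomeomorph.measurableEmbedding).mp ?_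
  simp_rw [Function.comp_def, U, gaussDensity_eigenvectorBasis_repr_symm]
  exact integrable_exp_neg_sum_mul_sq hA.eigenvalues_pos

lemma gaussDensity_pos (A : Matrix (Fin n) (Fin n) ℝ) (x : EuclideanSpace ℝ (Fin n)) :
    0 < gaussDensity A x :=
  Real.exp_pos _

lemma gaussDensity_neg (A : Matrix (Fin n) (Fin n) ℝ) (x : EuclideanSpace ℝ (Fin n)) :
    gaussDensity A (-x) = gaussDensity A x := by
  rw [gaussDensity, gaussDensity, matVec_eq_toEuclideanLin, map_neg, inner_neg_neg,
    matVec_eq_toEuclideanLin]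

lemma gaussDensity_smul_one (a : ℝ) (x : EuclideanSpace ℝ (Fin n)) :
    gaussDensity (a • 1) x = Real.exp (-(a * ‖x‖ ^ 2) / 2) := by
  have h : matVec (a • 1) x = a • x := by
    rw [matVec_eq_toEuclideanLin, map_smul, LinearMap.smul_apply, Matrix.toLpLin_one,
      LinearMap.id_apply]
  rw [gaussDensity, h, real_inner_smul_left, real_inner_self_eq_norm_sq]

lemma gaussDensity_smul_one_map (a : ℝ)
    (U : EuclideanSpace ℝ (Fin n) ≃ₗᵢ[ℝ] EuclideanSpace ℝ (Fin n)) (x : EuclideanSpace ℝ (Fin n)) :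
    gaussDensity (a • 1) (U x) = gaussDensity (a • 1) x := by
  rw [gaussDensity_smul_one, gaussDensity_smul_one, U.norm_map]

end Density

lemma addHaar_setOf_inner_eq_zero {E : Type*} [NormedAddCommGroup E] [InnerProductSpace ℝ E]
    [FiniteDimensional ℝ E] [MeasurableSpace E] [BorelSpace E] (μ : Measure E) [μ.IsAddHaarMeasure]
    {ω : E} (hω : ω ≠ 0) : μ {x | ⟪x, ω⟫ = 0} = 0 := by
  have hset : {x | ⟪x, ω⟫ = 0} = ((ℝ ∙ ω)ᗮ : Submodule ℝ E) := by
    ext x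
    rw [SetLike.mem_coe, Submodule.mem_orthogonal_singleton_iff_inner_right, real_inner_comm,
      mem_ofPred_eq]
  rw [hset]
  refine Measure.addHaar_submodule μ _ fun htop => hω ((inner_self_eq_zero (𝕜 := ℝ)).mp ?_)
  exact Submodule.mem_orthogonal_singleton_iff_inner_right.mp (htop ▸ Submodule.mem_top)

section HalfSpace

variable {n : ℕ}

lemma isOpen_halfSpace (ω : EuclideanSpace ℝ (Fin n)) (t : ℝ) : IsOpen (halfSpace ω t) :=
  isOpen_lt (continuous_id.inner continuous_const) continuous_const

lemma image_halfSpace (U : EuclideanSpace ℝ (Fin n) ≃ₗᵢ[ℝ] EuclideanSpace ℝ (Fin n))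
    (ω : EuclideanSpace ℝ (Fin n)) (t : ℝ) : U '' halfSpace ω t = halfSpace (U ω) t := by
  ext x
  rw [U.image_eq_preimage_symm, mem_preimage, halfSpace, halfSpace, mem_ofPred_eq, mem_ofPred_eq,
    ← U.inner_map_map, U.apply_symm_apply]

lemma two_mul_setIntegral_halfSpace_zero {f : EuclideanSpace ℝ (Fin n) → ℝ} (hf : Integrable f)
    (hf_even : ∀ x, f (-x) = f x) {ω : EuclideanSpace ℝ (Fin n)} (hω : ω ≠ 0) :
    2 * ∫ x in halfSpace ω 0, f x = ∫ x, f x := by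
  have hcompl : ((halfSpace ω 0)ᶜ : Set (EuclideanSpace ℝ (Fin n))) =ᵐ[volume]
      (fun x => -x) ⁻¹' halfSpace ω 0 := by
    refine eventuallyEq_set.mpr ?_
    filter_upwards [measure_eq_zero_iff_ae_notMem.mp (addHaar_setOf_inner_eq_zero volume hω)]
      with x hx
    change ¬⟪x, ω⟫ = 0 at hx
    change ¬⟪x, ω⟫ < 0 ↔ ⟪-x, ω⟫ < 0
    rw [inner_neg_left, neg_lt_zero, not_lt]
    exact ⟨fun h => lt_of_le_of_ne h (Ne.symm hx), le_of_lt⟩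
  have hneg : ∫ x in (fun x => -x) ⁻¹' halfSpace ω 0, f (-x) = ∫ x in halfSpace ω 0, f x :=
    (LinearIsometryEquiv.neg ℝ).measurePreserving.setIntegral_preimage_emb
      (Homeomorph.neg _).measurableEmbedding f _
  simp_rw [hf_even] at hneg
  rw [← integral_add_compl (isOpen_halfSpace ω 0).measurableSet hf, setIntegral_congr_set hcompl,
    hneg, two_mul]

lemma strictMono_setIntegral_halfSpace {f : EuclideanSpace ℝ (Fin n) → ℝ} (hf : Integrable f)
    (hf_pos : ∀ x, 0 < f x) {ω : EuclideanSpace ℝ (Fin n)} (hω : ω ≠ 0) :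
    StrictMono fun t => ∫ x in halfSpace ω t, f x := by
  intro t t' htt'
  have hsub : halfSpace ω t ⊆ halfSpace ω t' := fun x hx => lt_trans hx htt'
  have hslab : IsOpen ({x | t < ⟪x, ω⟫} ∩ halfSpace ω t') :=
    (isOpen_lt continuous_const (continuous_id.inner continuous_const)).inter
      (isOpen_halfSpace ω t')
  have hslab_ne : ({x | t < ⟪x, ω⟫} ∩ halfSpace ω t').Nonempty := by
    refine ⟨((t + t') / 2 / ‖ω‖ ^ 2) • ω, ?_⟩
    have : ‖ω‖ ^ 2 ≠ 0 := by positivity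
    simp only [halfSpace, mem_inter_iff, mem_ofPred_eq, real_inner_smul_left,
      real_inner_self_eq_norm_sq, div_mul_cancel₀ _ this]
    constructor <;> linarith
  have hdiff : 0 < ∫ x in halfSpace ω t' \ halfSpace ω t, f x := by
    have hsupp : Function.support f = univ := eq_univ_of_forall fun x => (hf_pos x).ne'
    rw [setIntegral_pos_iff_support_of_nonneg_ae (ae_of_all _ fun x => (hf_pos x).le)
      hf.integrableOn, hsupp, univ_inter]
    refine (hslab.measure_pos volume hslab_ne).trans_le (measure_mono fun x hx => ?_)
    exact ⟨hx.2, fun h : ⟪x, ω⟫ < t => lt_asymm hx.1 h⟩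
  rw [setIntegral_sdiff (isOpen_halfSpace ω t).measurableSet hf.integrableOn hsub] at hdiff
  exact sub_pos.mp hdiff

end HalfSpace

section EssBoundary

variable {n : ℕ}

lemma essBoundary_subset_frontier (E : Set (EuclideanSpace ℝ (Fin n))) :
    essBoundary E ⊆ frontier E := by
  rintro x ⟨hx₀, hx₁⟩
  refine ⟨of_not_not fun hx => hx₀ ?_, fun hx => hx₁ ?_⟩
  · obtain ⟨ε, hε, hball⟩ :=
      Metric.mem_nhds_iff.mp (isClosed_closure.isOpen_compl.mem_nhds hx)
    refine tendsto_const_nhds.congr' ?_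
    filter_upwards [Ioo_mem_nhdsGT hε] with r hr
    have : E ∩ ball x r = ∅ := eq_empty_of_forall_notMem fun y hy =>
      hball (ball_subset_ball hr.2.le hy.2) (subset_closure hy.1)
    rw [this, measure_empty, ENNReal.zero_div]
  · obtain ⟨ε, hε, hball⟩ := Metric.mem_nhds_iff.mp (mem_interior_iff_mem_nhds.mp hx)
    refine tendsto_const_nhds.congr' ?_
    filter_upwards [Ioo_mem_nhdsGT hε] with r hr
    rw [inter_eq_right.mpr ((ball_subset_ball hr.2.le).trans hball),
      ENNReal.div_self (measure_ball_pos volume x hr.1).ne' measure_ball_lt_top.ne]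

lemma mem_essBoundary_of_two_mul_measure_inter_ball {E : Set (EuclideanSpace ℝ (Fin n))}
    {x : EuclideanSpace ℝ (Fin n)} (h : ∀ r > 0, 2 * volume (E ∩ ball x r) = volume (ball x r)) :
    x ∈ essBoundary E := by
  have hhalf : Tendsto (fun r : ℝ => volume (E ∩ ball x r) / volume (ball x r)) (𝓝[>] 0)
      (𝓝 2⁻¹) := by
    refine tendsto_const_nhds.congr' ?_
    filter_upwards [self_mem_nhdsWithin] with r (hr : 0 < r)
    have h₀ : volume (E ∩ ball x r) ≠ 0 := fun h₀ =>
      (measure_ball_pos volume x hr).ne' (by rw [← h r hr, h₀, mul_zero])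
    have h_top : volume (E ∩ ball x r) ≠ ⊤ :=
      measure_ne_top_of_subset inter_subset_right measure_ball_lt_top.ne
    rw [← h r hr, ENNReal.div_eq_inv_mul, ENNReal.mul_inv (by simp) (by simp), mul_assoc,
      ENNReal.inv_mul_cancel h₀ h_top, mul_one]
  refine ⟨fun h₀ => ?_, fun h₁ => ?_⟩
  · simpa using tendsto_nhds_unique hhalf h₀
  · simpa using tendsto_nhds_unique hhalf h₁

lemma two_mul_volume_halfSpace_inter_ball {ω x : EuclideanSpace ℝ (Fin n)} (hω : ω ≠ 0)
    (hx : ⟪x, ω⟫ = 0) (r : ℝ) :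
    2 * volume (halfSpace ω 0 ∩ ball x r) = volume (ball x r) := by
  set R := (ℝ ∙ ω)ᗮ.reflection
  have hRx : R x = x := Submodule.reflection_mem_subspace_eq_self
    (Submodule.mem_orthogonal_singleton_iff_inner_right.mpr (by rwa [real_inner_comm]))
  have hR_inner (y : EuclideanSpace ℝ (Fin n)) : ⟪R y, ω⟫ = -⟪y, ω⟫ := by
    rw [← R.inner_map_map, Submodule.reflection_reflection,
      Submodule.reflection_orthogonalComplement_singleton_eq_neg, inner_neg_right]
  have hRs : R ⁻¹' (halfSpace ω 0 ∩ ball x r) = {y | 0 < ⟪y, ω⟫} ∩ ball x r := by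
    rw [preimage_inter, R.preimage_ball, Submodule.reflection_symm, hRx]
    congr 1
    ext y
    simp [halfSpace, hR_inner]
  have hmeas := R.measurePreserving.measure_preimage
    ((isOpen_halfSpace ω 0).inter (isOpen_ball (x := x) (ε := r))).measurableSet.nullMeasurableSet
  rw [hRs] at hmeas
  have hsplit : ball x r \ {y | ⟪y, ω⟫ = 0} =
      (halfSpace ω 0 ∩ ball x r) ∪ ({y | 0 < ⟪y, ω⟫} ∩ ball x r) := by
    ext y
    simp only [halfSpace, Set.mem_sdiff, mem_union, mem_inter_iff, mem_ofPred_eq, ← or_and_right,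
      and_comm, ← ne_iff_lt_or_gt]
  have hdisj : Disjoint (halfSpace ω 0 ∩ ball x r) ({y | 0 < ⟪y, ω⟫} ∩ ball x r) :=
    disjoint_left.mpr fun y h₁ h₂ => by
      have h₁ : ⟪y, ω⟫ < 0 := h₁.1
      exact h₁.not_gt h₂.1
  rw [← measure_sdiff_null (s := ball x r) (addHaar_setOf_inner_eq_zero volume hω), hsplit,
    measure_union hdisj ((isOpen_lt continuous_const (continuous_id.inner continuous_const)).inter
      isOpen_ball).measurableSet, hmeas, two_mul]

lemma essBoundary_halfSpace_zero {ω : EuclideanSpace ℝ (Fin n)} (hω : ω ≠ 0) :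
    essBoundary (halfSpace ω 0) = {x | ⟪x, ω⟫ = 0} :=
  ((essBoundary_subset_frontier _).trans
    (frontier_lt_subset_eq (continuous_id.inner continuous_const) continuous_const)).antisymm
    fun _ hx => mem_essBoundary_of_two_mul_measure_inter_ball fun r _ =>
      two_mul_volume_halfSpace_inter_ball hω hx r

lemma essBoundary_image (U : EuclideanSpace ℝ (Fin n) ≃ₗᵢ[ℝ] EuclideanSpace ℝ (Fin n))
    (E : Set (EuclideanSpace ℝ (Fin n))) : essBoundary (U '' E) = U '' essBoundary E := by
  have hvol (s : Set (EuclideanSpace ℝ (Fin n))) : volume (U '' s) = volume s := by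
    rw [U.image_eq_preimage_symm]
    exact U.symm.measurePreserving.measure_preimage_equiv
      (f := U.symm.toHomeomorph.toMeasurableEquiv) s
  have hratio (x : EuclideanSpace ℝ (Fin n)) (r : ℝ) :
      volume (U '' E ∩ ball (U x) r) / volume (ball (U x) r) =
        volume (E ∩ ball x r) / volume (ball x r) := by
    rw [← U.image_ball, ← image_inter U.injective, hvol, hvol]
  ext y
  obtain ⟨x, rfl⟩ := U.surjective y
  simp only [essBoundary, U.injective.mem_set_image, mem_ofPred_eq, hratio]

end EssBoundary

lemma setIntegral_range_hausdorffMeasure {X Y E : Type*} [MetricSpace X] [CompleteSpace X]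
    [MeasurableSpace X] [BorelSpace X] [MetricSpace Y] [MeasurableSpace Y] [BorelSpace Y]
    [NormedAddCommGroup E] [NormedSpace ℝ E] {ψ : X → Y} (hψ : Isometry ψ) {d : ℝ} (hd : 0 ≤ d)
    (f : Y → E) : ∫ y in range ψ, f y ∂μH[d] = ∫ x, f (ψ x) ∂μH[d] := by
  rw [← hψ.map_hausdorffMeasure (Or.inl hd), hψ.isClosedEmbedding.measurableEmbedding.integral_map]

lemma LinearIsometryEquiv.setIntegral_image_hausdorffMeasure {E F G : Type*}
    [NormedAddCommGroup E] [NormedSpace ℝ E] [MeasurableSpace E] [BorelSpace E]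
    [NormedAddCommGroup F] [NormedSpace ℝ F] [MeasurableSpace F] [BorelSpace F]
    [NormedAddCommGroup G] [NormedSpace ℝ G] (U : E ≃ₗᵢ[ℝ] F) (d : ℝ) (f : F → G) (s : Set E) :
    ∫ y in U '' s, f y ∂μH[d] = ∫ x in s, f (U x) ∂μH[d] :=
  (U.toIsometryEquiv.measurePreserving_hausdorffMeasure d).setIntegral_image_emb
    U.toHomeomorph.measurableEmbedding f s

section CoordHyperplane

variable {k : ℕ}

def insertZeroAt (i : Fin (k + 1)) (z : EuclideanSpace ℝ (Fin k)) :
    EuclideanSpace ℝ (Fin (k + 1)) :=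
  WithLp.toLp 2 (i.insertNth 0 z.ofLp)

@[simp]
lemma insertZeroAt_apply_same (i : Fin (k + 1)) (z : EuclideanSpace ℝ (Fin k)) :
    insertZeroAt i z i = 0 := by
  simp [insertZeroAt]

@[simp]
lemma insertZeroAt_apply_succAbove (i : Fin (k + 1)) (z : EuclideanSpace ℝ (Fin k)) (m : Fin k) :
    insertZeroAt i z (i.succAbove m) = z m := by
  simp [insertZeroAt]

lemma isometry_insertZeroAt (i : Fin (k + 1)) : Isometry (insertZeroAt i) := by
  refine Isometry.of_dist_eq fun z w => ?_
  simp [EuclideanSpace.dist_eq, Fin.sum_univ_succAbove _ i]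

lemma range_insertZeroAt (i : Fin (k + 1)) : range (insertZeroAt i) = {y | y i = 0} := by
  refine (range_subset_iff.mpr fun z => insertZeroAt_apply_same i z).antisymm fun y hy => ?_
  refine ⟨WithLp.toLp 2 fun m => y (i.succAbove m), PiLp.ext fun j => ?_⟩
  rcases Fin.eq_self_or_eq_succAbove i j with rfl | ⟨m, rfl⟩
  · exact (insertZeroAt_apply_same _ _).trans (hy : y j = 0).symm
  · exact insertZeroAt_apply_succAbove _ _ _

lemma setIntegral_coord_eq_zero_exp_neg_sum_mul_sq (c : Fin (k + 1) → ℝ) (i : Fin (k + 1)) :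
    ∫ y in {y : EuclideanSpace ℝ (Fin (k + 1)) | y i = 0},
        Real.exp (-(∑ j, c j * y j ^ 2) / 2) ∂μH[k] =
      (μH[k] : Measure (EuclideanSpace ℝ (Fin k))).addHaarScalarFactor volume *
        ∏ m, √(2 * Real.pi / c (i.succAbove m)) := by
  rw [← range_insertZeroAt,
    setIntegral_range_hausdorffMeasure (isometry_insertZeroAt i) k.cast_nonneg]
  simp_rw [Fin.sum_univ_succAbove _ i, insertZeroAt_apply_same, insertZeroAt_apply_succAbove,
    zero_pow two_ne_zero, mul_zero, zero_add]
  conv_lhs => rw [Measure.isAddLeftInvariant_eq_smul μH[k] volume]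
  rw [integral_smul_nnreal_measure, integral_exp_neg_sum_mul_sq, NNReal.smul_def, smul_eq_mul]

end CoordHyperplane

lemma Matrix.PosDef.exists_eq_smul_one_of_eigenvalues_eq {ι : Type*} [Fintype ι] [DecidableEq ι]
    {A : Matrix ι ι ℝ} (hA : A.PosDef) (h : ∀ i j, hA.1.eigenvalues i = hA.1.eigenvalues j) :
    ∃ a : ℝ, 0 < a ∧ A = a • 1 := by
  rcases isEmpty_or_nonempty ι with hι | ⟨⟨i₀⟩⟩
  · exact ⟨1, one_pos, Subsingleton.elim _ _⟩
  refine ⟨hA.1.eigenvalues i₀, hA.eigenvalues_pos i₀, ?_⟩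
  have hdiag : diagonal (RCLike.ofReal ∘ hA.1.eigenvalues) =
      hA.1.eigenvalues i₀ • (1 : Matrix ι ι ℝ) := by
    ext p q
    simp [diagonal_apply, one_apply, h p i₀]
  conv_lhs => rw [hA.1.spectral_theorem, hdiag, map_smul, map_one]

lemma Fin.apply_eq_of_prod_succAbove_eq {M : Type*} [CommMonoidWithZero M] [IsCancelMulZero M]
    [Nontrivial M]
    {k : ℕ} {g : Fin (k + 1) → M} (hg : ∀ l, g l ≠ 0)
    {i j : Fin (k + 1)} (h : ∏ m, g (i.succAbove m) = ∏ m, g (j.succAbove m)) : g i = g j := by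
  have hij := (Fin.prod_univ_succAbove g i).symm.trans (Fin.prod_univ_succAbove g j)
  rw [h] at hij
  exact mul_right_cancel₀ (Finset.prod_ne_zero_iff.mpr fun m _ => hg _) hij

section GaussianMeasure

variable {n : ℕ} {A : Matrix (Fin n) (Fin n) ℝ}

lemma gaussMass_image {U : EuclideanSpace ℝ (Fin n) ≃ₗᵢ[ℝ] EuclideanSpace ℝ (Fin n)}
    (hU : ∀ x, gaussDensity A (U x) = gaussDensity A x) (E : Set (EuclideanSpace ℝ (Fin n))) :
    gaussMass A (U '' E) = gaussMass A E := by
  simp_rw [gaussMass,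
    U.measurePreserving.setIntegral_image_emb U.toHomeomorph.measurableEmbedding, hU]

lemma gaussPerim_image {U : EuclideanSpace ℝ (Fin n) ≃ₗᵢ[ℝ] EuclideanSpace ℝ (Fin n)}
    (hU : ∀ x, gaussDensity A (U x) = gaussDensity A x) (E : Set (EuclideanSpace ℝ (Fin n))) :
    gaussPerim A (U '' E) = gaussPerim A E := by
  simp_rw [gaussPerim, gaussPerimIn, inter_univ, essBoundary_image,
    U.setIntegral_image_hausdorffMeasure, hU]

lemma gaussMass_halfSpace_zero_eq (hA : A.PosDef) {ω₁ ω₂ : EuclideanSpace ℝ (Fin n)}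
    (hω₁ : ω₁ ≠ 0) (hω₂ : ω₂ ≠ 0) :
    gaussMass A (halfSpace ω₁ 0) = gaussMass A (halfSpace ω₂ 0) := by
  have hf := integrable_gaussDensity hA
  rw [gaussMass, gaussMass]
  congr 1
  linarith [two_mul_setIntegral_halfSpace_zero hf (gaussDensity_neg A) hω₁,
    two_mul_setIntegral_halfSpace_zero hf (gaussDensity_neg A) hω₂]

lemma strictMono_gaussMass_halfSpace (hA : A.PosDef) {ω : EuclideanSpace ℝ (Fin n)} (hω : ω ≠ 0) :
    StrictMono fun t => gaussMass A (halfSpace ω t) :=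
  (strictMono_setIntegral_halfSpace (integrable_gaussDensity hA) (gaussDensity_pos A) hω).const_mul
    (div_pos (Real.sqrt_pos.mpr hA.det_pos) (by positivity))

lemma gaussPerim_halfSpace_eigenvectorBasis {k : ℕ} {A : Matrix (Fin (k + 1)) (Fin (k + 1)) ℝ}
    (hA : A.IsHermitian) (i : Fin (k + 1)) :
    gaussPerim A (halfSpace (hA.eigenvectorBasis i) 0) =
      √A.det / (2 * Real.pi) ^ ((k : ℝ) / 2) *
        ((μH[k] : Measure (EuclideanSpace ℝ (Fin k))).addHaarScalarFactor volume *
          ∏ m, √(2 * Real.pi / hA.eigenvalues (i.succAbove m))) := by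
  set B := hA.eigenvectorBasis
  have hbdry : essBoundary (halfSpace (B i) 0) = B.repr.symm '' {y | y i = 0} := by
    rw [essBoundary_halfSpace_zero (B.orthonormal.ne_zero i), B.repr.symm.image_eq_preimage_symm]
    ext x
    simp [B.repr_apply_apply, real_inner_comm]
  have hdim : ((k + 1 : ℕ) : ℝ) - 1 = k := by push_cast; ring
  rw [gaussPerim, gaussPerimIn, inter_univ, hbdry, hdim,
    B.repr.symm.setIntegral_image_hausdorffMeasure]
  simp_rw [B, gaussDensity_eigenvectorBasis_repr_symm, setIntegral_coord_eq_zero_exp_neg_sum_mul_sq]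

lemma eigenvalues_eq_of_gaussPerim_halfSpace_eq (hA : A.PosDef) {i j : Fin n}
    (h : gaussPerim A (halfSpace (hA.1.eigenvectorBasis i) 0) =
      gaussPerim A (halfSpace (hA.1.eigenvectorBasis j) 0)) :
    hA.1.eigenvalues i = hA.1.eigenvalues j := by
  obtain ⟨k, rfl⟩ : ∃ k, n = k + 1 := Nat.exists_eq_add_one_of_ne_zero i.pos.ne'
  have hC : 0 < √A.det / (2 * Real.pi) ^ ((k : ℝ) / 2) *
      (μH[k] : Measure (EuclideanSpace ℝ (Fin k))).addHaarScalarFactor volume :=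
    mul_pos (div_pos (Real.sqrt_pos.mpr hA.det_pos) (by positivity))
      (Measure.addHaarScalarFactor_pos_of_isAddHaarMeasure _ _)
  rw [gaussPerim_halfSpace_eigenvectorBasis, gaussPerim_halfSpace_eigenvectorBasis, ← mul_assoc,
    ← mul_assoc] at h
  have hg := Fin.apply_eq_of_prod_succAbove_eq
    (g := fun l => √(2 * Real.pi / hA.1.eigenvalues l))
    (fun l => (Real.sqrt_pos.mpr (div_pos Real.two_pi_pos (hA.eigenvalues_pos l))).ne')
    (mul_left_cancel₀ hC.ne' h)
  rw [Real.sqrt_inj (div_pos Real.two_pi_pos (hA.eigenvalues_pos i)).le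
    (div_pos Real.two_pi_pos (hA.eigenvalues_pos j)).le,
    div_eq_div_iff (hA.eigenvalues_pos i).ne' (hA.eigenvalues_pos j).ne'] at hg
  exact (mul_left_cancel₀ Real.two_pi_pos.ne' hg).symm

theorem gaussPerim_halfSpace_eq_of_gaussMass_eq {a : ℝ} (ha : 0 < a)
    {ω₁ ω₂ : EuclideanSpace ℝ (Fin n)} (hω₁ : ω₁ ≠ 0) (hω : ‖ω₁‖ = ‖ω₂‖) {t₁ t₂ : ℝ}
    (h : gaussMass (a • 1) (halfSpace ω₁ t₁) = gaussMass (a • 1) (halfSpace ω₂ t₂)) :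
    gaussPerim (a • 1) (halfSpace ω₁ t₁) = gaussPerim (a • 1) (halfSpace ω₂ t₂) := by
  set U := (ℝ ∙ (ω₁ - ω₂))ᗮ.reflection
  have hU (t : ℝ) : U '' halfSpace ω₁ t = halfSpace ω₂ t := by
    rw [image_halfSpace, Submodule.reflection_sub hω]
  have ht : t₁ = t₂ := (strictMono_gaussMass_halfSpace (PosDef.one.smul ha) hω₁).injective <| by
    simp only [h, ← hU, gaussMass_image (gaussDensity_smul_one_map a U)]
  rw [← hU, gaussPerim_image (gaussDensity_smul_one_map a U), ht]

end GaussianMeasure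

theorem perim_halfSpaces_eq_iff_isotropic_general {n : ℕ}
    (A : Matrix (Fin n) (Fin n) ℝ) (hA : A.PosDef) :
    (∀ (ω₁ ω₂ : EuclideanSpace ℝ (Fin n)) (t₁ t₂ : ℝ), ‖ω₁‖ = 1 → ‖ω₂‖ = 1 →
        gaussMass A (halfSpace ω₁ t₁) = gaussMass A (halfSpace ω₂ t₂) →
        gaussPerim A (halfSpace ω₁ t₁) = gaussPerim A (halfSpace ω₂ t₂)) ↔
      ∃ a : ℝ, 0 < a ∧ A = a • (1 : Matrix (Fin n) (Fin n) ℝ) := by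
  constructor
  · intro h
    set B := hA.1.eigenvectorBasis
    exact hA.exists_eq_smul_one_of_eigenvalues_eq fun i j =>
      eigenvalues_eq_of_gaussPerim_halfSpace_eq hA <|
        h _ _ 0 0 (B.norm_eq_one i) (B.norm_eq_one j) <|
          gaussMass_halfSpace_zero_eq hA (B.orthonormal.ne_zero i) (B.orthonormal.ne_zero j)
  · rintro ⟨a, ha, rfl⟩ ω₁ ω₂ t₁ t₂ hω₁ hω₂
    exact gaussPerim_halfSpace_eq_of_gaussMass_eq ha (norm_ne_zero_iff.mp (hω₁ ▸ one_ne_zero))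
      (hω₁.trans hω₂.symm)

/-- For a symmetric positive definite `n×n` matrix `A` with `n ≥ 2`:
the anisotropic Gaussian perimeter assigns equal values to any two half-spaces of equal
`γ_A`-measure if and only if `A = a·I` for some `a > 0`. -/
theorem perim_halfSpaces_eq_iff_isotropic {n : ℕ} (hn : 2 ≤ n)
    (A : Matrix (Fin n) (Fin n) ℝ) (hA : A.PosDef) :
    (∀ (ω₁ ω₂ : EuclideanSpace ℝ (Fin n)) (t₁ t₂ : ℝ), ‖ω₁‖ = 1 → ‖ω₂‖ = 1 →
        gaussMass A (halfSpace ω₁ t₁) = gaussMass A (halfSpace ω₂ t₂) →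
        gaussPerim A (halfSpace ω₁ t₁) = gaussPerim A (halfSpace ω₂ t₂)) ↔
      ∃ a : ℝ, 0 < a ∧ A = a • (1 : Matrix (Fin n) (Fin n) ℝ) :=
  perim_halfSpaces_eq_iff_isotropic_general A hA
end
end

section
/- For a symmetric positive definite matrix A, a unit vector ω, and t ∈ ℝ, the A-anisotropic Gaussian barycenter of the half-space H(ω,t) equals (−1/√(2π)) · exp(−t²/(2|(√A)⁻¹ω|²)) · (A⁻¹ω/|(√A)⁻¹ω|). -/
open MeasureTheory Metric Filter Set Matrix
open scoped ENNReal Topology RealInnerProductSpace Pointwise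

noncomputable section

/-!
Substituting `x = B⁻¹ y` turns the `A`-Gaussian density into the standard one `exp (-‖y‖² / 2)`
(with Jacobian `|det B|⁻¹ = (√(det A))⁻¹`) and the half-space `H(ω, t)` into `H(v, t)` with
`v = B⁻¹ ω`. For the standard Gaussian, an orthonormal basis starting with `v / ‖v‖` reduces to the
half-space `{y | y₀ < t / ‖v‖}`. There each component of the integrand is a product of functions
of one coordinate each, so the `i`-th component vanishes for `i ≠ 0` because `r exp (-r² / 2)` is
odd, and the `0`-th one is `√(2π) ^ (n - 1) · ∫_{r < s} r exp (-r² / 2) dr = -√(2π) ^ (n - 1) ·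
exp (-s² / 2)`.
-/

open Real

theorem integral_exp_neg_sq_div_two : ∫ x : ℝ, exp (-x ^ 2 / 2) = √(2 * π) := by
  convert integral_gaussian (1 / 2) using 2 with x <;> ring_nf

theorem integrable_exp_neg_sq_div_two : Integrable fun x : ℝ => exp (-x ^ 2 / 2) := by
  convert integrable_exp_neg_mul_sq (b := 1 / 2) (by norm_num) using 2 with x
  ring_nf

theorem integrable_mul_exp_neg_sq_div_two : Integrable fun x : ℝ => x * exp (-x ^ 2 / 2) := by
  convert integrable_mul_exp_neg_mul_sq (b := 1 / 2) (by norm_num) using 3 with x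
  ring_nf

theorem integral_mul_exp_neg_sq_div_two : ∫ x : ℝ, x * exp (-x ^ 2 / 2) = 0 := by
  have h := integral_neg_eq_self (fun x : ℝ => x * exp (-x ^ 2 / 2)) volume
  simp only [neg_sq, neg_mul, integral_neg] at h
  linarith

theorem integral_Iio_mul_exp_neg_sq_div_two (s : ℝ) :
    ∫ x in Iio s, x * exp (-x ^ 2 / 2) = -exp (-s ^ 2 / 2) := by
  have hderiv (x : ℝ) : HasDerivAt (fun x => -exp (-x ^ 2 / 2)) (x * exp (-x ^ 2 / 2)) x := by
    have h : HasDerivAt (fun x : ℝ => -x ^ 2 / 2) (-x) x :=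
      (((hasDerivAt_id x).fun_pow 2).fun_neg.div_const 2).congr_deriv (by simp; ring)
    exact h.exp.fun_neg.congr_deriv (by ring)
  have hlim : Tendsto (fun x : ℝ => -exp (-x ^ 2 / 2)) atBot (𝓝 (-0)) := by
    refine (tendsto_exp_atBot.comp ?_).neg
    refine Tendsto.atBot_div_const two_pos (tendsto_neg_atBot_iff.mpr ?_)
    exact (tendsto_pow_atTop two_ne_zero).comp tendsto_neg_atBot_atTop |>.congr fun x => by simp
  rw [← integral_Iic_eq_integral_Iio,
    integral_Iic_of_hasDerivAt_of_tendsto' (fun x _ => hderiv x)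
      integrable_mul_exp_neg_sq_div_two.integrableOn hlim]
  ring

namespace EuclideanSpace

variable {ι : Type*} [Fintype ι] [DecidableEq ι]

theorem volume_restrict_apply_lt (i₀ : ι) (s : ℝ) :
    (volume : Measure (EuclideanSpace ℝ ι)).restrict {y | y i₀ < s} =
      (Measure.pi fun j => volume.restrict (if j = i₀ then Iio s else univ)).map
        (WithLp.toLp 2) := by
  rw [← Measure.restrict_pi_pi, ← volume_pi, ← (PiLp.volume_preserving_toLp ι).map_eq,
    ← MeasurableEquiv.coe_toLp, (MeasurableEquiv.toLp 2 (ι → ℝ)).measurableEmbedding.restrict_map]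
  congr 3
  ext z
  simp

theorem exp_neg_norm_sq_toLp_mul_eq_prod (i : ι) (z : ι → ℝ) :
    exp (-‖WithLp.toLp 2 z‖ ^ 2 / 2) * z i =
      ∏ j, (if j = i then z j else 1) * exp (-z j ^ 2 / 2) := by
  rw [Finset.prod_mul_distrib, Finset.prod_ite_eq', ← exp_sum, EuclideanSpace.norm_sq_eq]
  simp only [Real.norm_eq_abs, sq_abs, ← Finset.sum_div, Finset.sum_neg_distrib,
    Finset.mem_univ, if_true, mul_comm]

theorem integrableOn_apply_lt_exp_mul_apply (i i₀ : ι) (s : ℝ) :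
    IntegrableOn (fun y : EuclideanSpace ℝ ι => exp (-‖y‖ ^ 2 / 2) * y i) {y | y i₀ < s} := by
  rw [IntegrableOn, volume_restrict_apply_lt, ← MeasurableEquiv.coe_toLp,
    (MeasurableEquiv.toLp 2 (ι → ℝ)).measurableEmbedding.integrable_map_iff]
  simp only [Function.comp_def, MeasurableEquiv.coe_toLp, exp_neg_norm_sq_toLp_mul_eq_prod]
  refine Integrable.fintype_prod (f := fun j r => (if j = i then r else 1) * exp (-r ^ 2 / 2))
    fun j => Integrable.restrict ?_
  split_ifs
  · exact integrable_mul_exp_neg_sq_div_two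
  · simpa using integrable_exp_neg_sq_div_two

theorem setIntegral_apply_lt_exp_mul_apply (i i₀ : ι) (s : ℝ) :
    ∫ y in {y : EuclideanSpace ℝ ι | y i₀ < s}, exp (-‖y‖ ^ 2 / 2) * y i =
      if i = i₀ then -(√(2 * π) ^ (Fintype.card ι - 1) * exp (-s ^ 2 / 2)) else 0 := by
  rw [volume_restrict_apply_lt, ← MeasurableEquiv.coe_toLp,
    (MeasurableEquiv.toLp 2 (ι → ℝ)).measurableEmbedding.integral_map]
  simp only [MeasurableEquiv.coe_toLp, PiLp.toLp_apply, exp_neg_norm_sq_toLp_mul_eq_prod]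
  rw [integral_fintype_prod_eq_prod (f := fun j r => (if j = i then r else 1) * exp (-r ^ 2 / 2))]
  split_ifs with h
  · subst h
    rw [← Finset.mul_prod_erase _ _ (Finset.mem_univ i)]
    have hothers : ∀ j ∈ Finset.univ.erase i,
        ∫ r in (if j = i then Iio s else univ), (if j = i then r else 1) * exp (-r ^ 2 / 2) =
          √(2 * π) := fun j hj => by
      simp only [if_neg (Finset.ne_of_mem_erase hj), setIntegral_univ, one_mul,
        integral_exp_neg_sq_div_two]
    rw [Finset.prod_congr rfl hothers, Finset.prod_const, Finset.card_erase_of_mem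
      (Finset.mem_univ i), Finset.card_univ]
    simp only [↓reduceIte, integral_Iio_mul_exp_neg_sq_div_two]
    ring
  · refine Finset.prod_eq_zero (Finset.mem_univ i) ?_
    simp [h, integral_mul_exp_neg_sq_div_two]

theorem setIntegral_apply_lt_exp_smul (i₀ : ι) (s : ℝ) :
    ∫ y in {y : EuclideanSpace ℝ ι | y i₀ < s}, exp (-‖y‖ ^ 2 / 2) • y =
      -(√(2 * π) ^ (Fintype.card ι - 1) * exp (-s ^ 2 / 2)) • EuclideanSpace.single i₀ 1 := by
  ext i
  rw [eval_integral_piLp fun j => by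
    simpa [IntegrableOn] using integrableOn_apply_lt_exp_mul_apply j i₀ s]
  simp only [PiLp.smul_apply, smul_eq_mul, setIntegral_apply_lt_exp_mul_apply]
  split_ifs with h <;> simp [h]

end EuclideanSpace

section InnerProductSpace

variable {V : Type*} [NormedAddCommGroup V] [InnerProductSpace ℝ V] [FiniteDimensional ℝ V]
  [MeasurableSpace V] [BorelSpace V]

theorem setIntegral_inner_lt_exp_smul_of_norm_eq_one {u : V} (hu : ‖u‖ = 1) (s : ℝ) :
    ∫ y in {y : V | ⟪y, u⟫ < s}, exp (-‖y‖ ^ 2 / 2) • y =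
      -(√(2 * π) ^ (Module.finrank ℝ V - 1) * exp (-s ^ 2 / 2)) • u := by
  have hpos : 0 < Module.finrank ℝ V :=
    Module.finrank_pos_iff_exists_ne_zero.mpr ⟨u, norm_ne_zero_iff.mp (by simp [hu])⟩
  let i₀ : Fin (Module.finrank ℝ V) := ⟨0, hpos⟩
  have hunit : Orthonormal ℝ (({i₀} : Set _).domRestrict fun _ => u) :=
    ⟨fun _ => hu, fun i j hij => absurd (Subsingleton.elim i j) hij⟩
  obtain ⟨b, hb⟩ := hunit.exists_orthonormalBasis_extension_of_card_eq (by simp)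
  have hLu : b.repr.symm (EuclideanSpace.single i₀ 1) = u := by
    rw [b.repr_symm_single, hb i₀ rfl]
  have hpre : b.repr.symm ⁻¹' {y | ⟪y, u⟫ < s} = {z | z i₀ < s} := by
    ext z
    simp only [mem_preimage, mem_ofPred_eq, ← hb i₀ rfl, real_inner_comm (b i₀),
      ← b.repr_apply_apply, LinearIsometryEquiv.apply_symm_apply]
  rw [← b.measurePreserving_repr_symm.setIntegral_preimage_emb
    b.repr.symm.toHomeomorph.measurableEmbedding, hpre]
  simp_rw [LinearIsometryEquiv.norm_map, ← LinearIsometryEquiv.map_smul]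
  refine (b.repr.symm.toLinearIsometry.integral_comp_comm _).trans ?_
  rw [EuclideanSpace.setIntegral_apply_lt_exp_smul, Fintype.card_fin]
  exact (b.repr.symm.map_smul _ _).trans (congrArg _ hLu)

theorem setIntegral_inner_lt_exp_smul {v : V} (hv : v ≠ 0) (t : ℝ) :
    ∫ y in {y : V | ⟪y, v⟫ < t}, exp (-‖y‖ ^ 2 / 2) • y =
      -(√(2 * π) ^ (Module.finrank ℝ V - 1) * exp (-t ^ 2 / (2 * ‖v‖ ^ 2)) / ‖v‖) • v := by
  have hv' : 0 < ‖v‖ := norm_pos_iff.mpr hv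
  have hset : {y : V | ⟪y, v⟫ < t} = {y | ⟪y, ‖v‖⁻¹ • v⟫ < t / ‖v‖} := by
    ext y
    rw [mem_ofPred_eq, mem_ofPred_eq, real_inner_smul_right, inv_mul_eq_div,
      div_lt_div_iff_of_pos_right hv']
  rw [hset, setIntegral_inner_lt_exp_smul_of_norm_eq_one (by simp [norm_smul, hv'.ne']),
    smul_smul]
  congr 1
  field_simp

end InnerProductSpace

theorem ContinuousLinearEquiv.setIntegral_eq_abs_det_smul_setIntegral_preimage
    {E F : Type*} [NormedAddCommGroup E] [NormedSpace ℝ E] [FiniteDimensional ℝ E]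
    [MeasurableSpace E] [BorelSpace E] [NormedAddCommGroup F] [NormedSpace ℝ F]
    (μ : Measure E) [μ.IsAddHaarMeasure] (e : E ≃L[ℝ] E) (g : E → F) (s : Set E) :
    ∫ x in s, g x ∂μ = |LinearMap.det (e : E →ₗ[ℝ] E)| • ∫ y in e ⁻¹' s, g (e y) ∂μ := by
  have hdet : LinearMap.det (e : E →ₗ[ℝ] E) ≠ 0 :=
    LinearEquiv.isUnit_det' e.toLinearEquiv |>.ne_zero
  have hemb : MeasurableEmbedding e := e.toHomeomorph.measurableEmbedding
  rw [← hemb.integral_map, ← hemb.restrict_map]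
  erw [Measure.map_linearMap_addHaar_eq_smul_addHaar μ hdet]
  rw [Measure.restrict_smul, integral_smul_measure, smul_smul, ENNReal.toReal_ofReal (abs_nonneg _),
    abs_inv, mul_inv_cancel₀ (abs_ne_zero.mpr hdet), one_smul]

section Matrix

variable {n : ℕ}

theorem matVec_mul (M N : Matrix (Fin n) (Fin n) ℝ) (x : EuclideanSpace ℝ (Fin n)) :
    matVec (M * N) x = matVec M (matVec N x) := by
  change Matrix.toEuclideanCLM (𝕜 := ℝ) (M * N) x =
    Matrix.toEuclideanCLM (𝕜 := ℝ) M (Matrix.toEuclideanCLM (𝕜 := ℝ) N x)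
  rw [map_mul]
  rfl

theorem matVec_smul (M : Matrix (Fin n) (Fin n) ℝ) (c : ℝ) (x : EuclideanSpace ℝ (Fin n)) :
    matVec M (c • x) = c • matVec M x :=
  map_smul (Matrix.toEuclideanCLM (𝕜 := ℝ) M) c x

theorem matVec_one (x : EuclideanSpace ℝ (Fin n)) : matVec 1 x = x := by
  simp [matVec]

theorem inner_matVec_left {M : Matrix (Fin n) (Fin n) ℝ} (hM : M.IsHermitian)
    (x y : EuclideanSpace ℝ (Fin n)) : ⟪matVec M x, y⟫ = ⟪x, matVec M y⟫ :=
  Matrix.isSymmetric_toEuclideanLin_iff.mpr hM x y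

theorem preimage_matVec_halfSpace {M : Matrix (Fin n) (Fin n) ℝ} (hM : M.IsHermitian)
    (ω : EuclideanSpace ℝ (Fin n)) (t : ℝ) :
    matVec M ⁻¹' halfSpace ω t = halfSpace (matVec M ω) t := by
  ext x
  simp only [halfSpace, mem_preimage, mem_ofPred_eq, inner_matVec_left hM]

theorem gaussDensity_matVec_inv {A B : Matrix (Fin n) (Fin n) ℝ} (hB : B.IsHermitian)
    (hdet : B.det ≠ 0) (hBA : B * B = A) (y : EuclideanSpace ℝ (Fin n)) :
    gaussDensity A (matVec B⁻¹ y) = exp (-‖y‖ ^ 2 / 2) := by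
  have hBB : B * B⁻¹ = 1 := Matrix.mul_nonsing_inv B (isUnit_iff_ne_zero.mpr hdet)
  rw [gaussDensity, ← matVec_mul, ← hBA, Matrix.mul_assoc, hBB, Matrix.mul_one,
    inner_matVec_left hB, ← matVec_mul, hBB, matVec_one, real_inner_self_eq_norm_sq]

theorem det_toEuclideanCLM (M : Matrix (Fin n) (Fin n) ℝ) :
    (Matrix.toEuclideanCLM (𝕜 := ℝ) M).det = M.det :=
  LinearMap.det_toLpLin 2 M

theorem setIntegral_halfSpace_gaussDensity_smul {A B : Matrix (Fin n) (Fin n) ℝ}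
    (hB : B.IsHermitian) (hdet : B.det ≠ 0) (hBA : B * B = A) (ω : EuclideanSpace ℝ (Fin n))
    (t : ℝ) :
    ∫ x in halfSpace ω t, gaussDensity A x • x =
      |B.det|⁻¹ • matVec B⁻¹ (∫ y in halfSpace (matVec B⁻¹ ω) t, exp (-‖y‖ ^ 2 / 2) • y) := by
  have hdet_inv : (Matrix.toEuclideanCLM (𝕜 := ℝ) B⁻¹).det = B.det⁻¹ := by
    rw [det_toEuclideanCLM, Matrix.det_nonsing_inv, Ring.inverse_eq_inv']
  let e := (Matrix.toEuclideanCLM (𝕜 := ℝ) B⁻¹).toContinuousLinearEquivOfDetNeZero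
    (hdet_inv ▸ inv_ne_zero hdet)
  have he : ∀ y, e y = matVec B⁻¹ y := fun _ => rfl
  have hpre : e ⁻¹' halfSpace ω t = halfSpace (matVec B⁻¹ ω) t :=
    preimage_matVec_halfSpace hB.inv ω t
  have hintegrand : ∀ y, gaussDensity A (e y) • e y = e (exp (-‖y‖ ^ 2 / 2) • y) := fun y => by
    rw [he, gaussDensity_matVec_inv hB hdet hBA, map_smul, he]
  rw [e.setIntegral_eq_abs_det_smul_setIntegral_preimage volume, hpre]
  simp_rw [hintegrand]
  rw [e.integral_comp_comm, he]
  congr 1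
  rw [← abs_inv, ← hdet_inv]
  rfl

end Matrix

theorem gaussBary_halfSpace_general {n : ℕ} (A B : Matrix (Fin n) (Fin n) ℝ)
    (hB : B.PosDef) (hBA : B * B = A)
    (ω : EuclideanSpace ℝ (Fin n)) (hω : ‖ω‖ = 1) (t : ℝ) :
    gaussBary A (halfSpace ω t) =
      (-(Real.sqrt (2 * Real.pi))⁻¹ * Real.exp (- t ^ 2 / (2 * ‖matVec (B⁻¹) ω‖ ^ 2)) *
          (‖matVec (B⁻¹) ω‖)⁻¹) • matVec (A⁻¹) ω := by
  have hdet : B.det ≠ 0 := hB.det_pos.ne'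
  have hv : matVec B⁻¹ ω ≠ 0 := by
    intro h
    have := congrArg (matVec B) h
    rw [← matVec_mul, Matrix.mul_nonsing_inv B (isUnit_iff_ne_zero.mpr hdet), matVec_one] at this
    simp [this, matVec] at hω
  have hn : n ≠ 0 := by
    rintro rfl
    simp [Subsingleton.elim ω 0] at hω
  have hsqrt : √A.det = |B.det| := by rw [← hBA, Matrix.det_mul, sqrt_mul_self_eq_abs]
  have hpow : (2 * π) ^ ((n : ℝ) / 2) = √(2 * π) ^ (n - 1) * √(2 * π) := by
    rw [pow_sub_one_mul hn, sqrt_eq_rpow, ← rpow_natCast, ← rpow_mul (by positivity)]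
    ring_nf
  have hAinv : matVec B⁻¹ (matVec B⁻¹ ω) = matVec A⁻¹ ω := by
    rw [← matVec_mul, ← Matrix.mul_inv_rev, hBA]
  rw [gaussBary, setIntegral_halfSpace_gaussDensity_smul hB.isHermitian hdet hBA,
    halfSpace, setIntegral_inner_lt_exp_smul hv, finrank_euclideanSpace_fin, matVec_smul, hAinv,
    smul_smul, smul_smul, hsqrt, hpow]
  congr 1
  have : |B.det| ≠ 0 := abs_ne_zero.mpr hdet
  field_simp

/-- For a symmetric positive definite matrix `A` with square root `B`,
a unit vector `ω` and `t ∈ ℝ`, the `A`-anisotropic Gaussian barycenter of the half-space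
`H(ω,t)` equals `(−1/√(2π))·exp(−t²/(2|(√A)⁻¹ω|²))·(A⁻¹ω/|(√A)⁻¹ω|)`. -/
theorem gaussBary_halfSpace {n : ℕ} (A B : Matrix (Fin n) (Fin n) ℝ)
    (hA : A.PosDef) (hB : B.PosDef) (hBA : B * B = A)
    (ω : EuclideanSpace ℝ (Fin n)) (hω : ‖ω‖ = 1) (t : ℝ) :
    gaussBary A (halfSpace ω t) =
      (-(Real.sqrt (2 * Real.pi))⁻¹ * Real.exp (- t ^ 2 / (2 * ‖matVec (B⁻¹) ω‖ ^ 2)) *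
          (‖matVec (B⁻¹) ω‖)⁻¹) • matVec (A⁻¹) ω :=
  gaussBary_halfSpace_general A B hB hBA ω hω t
end
end
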